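/- For every real ε > 0, every real x > 0 and every integer n ≥ 1: P(S_n > x) ≥ n · P(max_{0≤k≤n} |S_k| ≤ ε·x)² · P(ξ₁ > (1+2ε)·x). -/

import Mathlib

/-! For `j < n`, consider the event that the walk stays in `[-εx, εx]` up to time `j`, jumps by
more than `(1 + 2ε)x` at step `j`, and then its increments stay in `[-εx, εx]` up to time `n`.
On it `S_n > x`; these `n` events are disjoint, because after the jump `S_{j+1} > εx`. Past, jump
and future are independent and the future increments form a copy of the walk, so each event
has probability at least `P(max_{k ≤ n} |S_k| ≤ εx)² P(ξ₁ > (1 + 2ε)x)`. -/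

open MeasureTheory ProbabilityTheory Filter

noncomputable section

def walk {Ω : Type*} (ξ : ℕ → Ω → ℝ) (n : ℕ) (ω : Ω) : ℝ :=
  ∑ i ∈ Finset.range n, ξ i ω

def walkMax {Ω : Type*} (ξ : ℕ → Ω → ℝ) (n : ℕ) (ω : Ω) : ℝ :=
  (Finset.range (n + 1)).sup' Finset.nonempty_range_add_one fun k => walk ξ k ω

def walkMin {Ω : Type*} (ξ : ℕ → Ω → ℝ) (n : ℕ) (ω : Ω) : ℝ :=
  (Finset.range (n + 1)).inf' Finset.nonempty_range_add_one fun k => walk ξ k ω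

def reflMax {Ω : Type*} (ξ : ℕ → Ω → ℝ) (n : ℕ) (ω : Ω) : ℝ :=
  (Finset.range (n + 1)).sup' Finset.nonempty_range_add_one fun v =>
    (Finset.range (v + 1)).sup' Finset.nonempty_range_add_one fun u =>
      walk ξ v ω - walk ξ u ω

def walkAbsMax {Ω : Type*} (ξ : ℕ → Ω → ℝ) (n : ℕ) (ω : Ω) : ℝ :=
  (Finset.range (n + 1)).sup' Finset.nonempty_range_add_one fun k => |walk ξ k ω|

section Walk

variable {Ω : Type*} (ξ : ℕ → Ω → ℝ) (ω : Ω)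

lemma walk_succ (k : ℕ) : walk ξ (k + 1) ω = walk ξ k ω + ξ k ω :=
  Finset.sum_range_succ _ _

lemma walk_add (a m : ℕ) :
    walk ξ (a + m) ω = walk ξ a ω + walk (fun i => ξ (a + i)) m ω :=
  Finset.sum_range_add _ _ _

lemma walkAbsMax_le_iff {n : ℕ} {c : ℝ} :
    walkAbsMax ξ n ω ≤ c ↔ ∀ k ≤ n, |walk ξ k ω| ≤ c := by
  simp [walkAbsMax, Finset.sup'_le_iff]

lemma walkAbsMax_mono {m n : ℕ} (hmn : m ≤ n) : walkAbsMax ξ m ω ≤ walkAbsMax ξ n ω :=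
  (walkAbsMax_le_iff ξ ω).2 fun k hk => (walkAbsMax_le_iff ξ ω).1 le_rfl k (hk.trans hmn)

end Walk

section Measurability

variable {Ω : Type*} {mΩ : MeasurableSpace Ω} {ξ : ℕ → Ω → ℝ}

lemma measurable_walk {k : ℕ} (h : ∀ i < k, Measurable (ξ i)) : Measurable (walk ξ k) :=
  Finset.measurable_sum _ fun i hi => h i (Finset.mem_range.1 hi)

lemma measurable_walkAbsMax {n : ℕ} (h : ∀ i < n, Measurable (ξ i)) :
    Measurable (walkAbsMax ξ n) :=
  Finset.measurable_range_sup'' fun _ hk =>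
    (measurable_walk fun i hi => h i (hi.trans_le hk)).abs

end Measurability

namespace ProbabilityTheory

variable {Ω ι β : Type*} [MeasurableSpace Ω] [mβ : MeasurableSpace β] {P : Measure Ω}
  {ξ : ι → Ω → β}

omit [MeasurableSpace Ω] in
lemma measurable_iSup_comap {S : Set ι} {i : ι} (hi : i ∈ S) :
    Measurable[⨆ j ∈ S, mβ.comap (ξ j), mβ] (ξ i) :=
  measurable_iff_comap_le.2 (le_iSup₂ (f := fun j (_ : j ∈ S) => mβ.comap (ξ j)) i hi)

lemma iIndepFun.measure_inter_eq_mul_of_disjoint (hmeas : ∀ i, Measurable (ξ i))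
    (hindep : iIndepFun ξ P) {S T : Set ι} (hST : Disjoint S T) {s t : Set Ω}
    (hs : MeasurableSet[⨆ i ∈ S, mβ.comap (ξ i)] s)
    (ht : MeasurableSet[⨆ i ∈ T, mβ.comap (ξ i)] t) :
    P (s ∩ t) = P s * P t :=
  (Indep_iff _ _ P).1
    (indep_iSup_of_disjoint (fun i => (hmeas i).comap_le) hindep.iIndep hST) s t hs ht

lemma iIndepFun.identDistrib_shift [IsProbabilityMeasure P] {ξ : ℕ → Ω → β}
    (hmeas : ∀ i, Measurable (ξ i)) (hindep : iIndepFun ξ P)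
    (hident : ∀ i, IdentDistrib (ξ i) (ξ 0) P P) (a : ℕ) :
    IdentDistrib (fun ω i => ξ (a + i) ω) (fun ω i => ξ i ω) P P where
  aemeasurable_fst := (measurable_pi_lambda _ fun i => hmeas (a + i)).aemeasurable
  aemeasurable_snd := (measurable_pi_lambda _ hmeas).aemeasurable
  map_eq := by
    rw [(hindep.precomp (add_right_injective a)).map_fun_eq_infinitePi_map fun i => hmeas _,
      hindep.map_fun_eq_infinitePi_map hmeas]
    simp only [(hident _).map_eq]

end ProbabilityTheory

def bigJumpEvent {Ω : Type*} (ξ : ℕ → Ω → ℝ) (c b : ℝ) (j m : ℕ) : Set Ω :=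
  {ω | walkAbsMax ξ j ω ≤ c} ∩ {ω | b < ξ j ω} ∩
    {ω | walkAbsMax (fun i => ξ (j + 1 + i)) m ω ≤ c}

section BigJump

variable {Ω : Type*} (ξ : ℕ → Ω → ℝ) {c x : ℝ}

lemma bigJumpEvent_subset (j m : ℕ) :
    bigJumpEvent ξ c (x + 2 * c) j m ⊆ {ω | x < walk ξ (j + 1 + m) ω} := by
  rintro ω ⟨⟨hbefore, hjump⟩, hafter⟩
  have hj := abs_le.1 ((walkAbsMax_le_iff ξ ω).1 hbefore j le_rfl)
  have hm := abs_le.1 ((walkAbsMax_le_iff _ ω).1 hafter m le_rfl)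
  simp only [Set.mem_ofPred_eq, walk_add, walk_succ] at hjump ⊢
  linarith [hj.1, hm.1]

lemma bigJumpEvent_disjoint (hx : 0 ≤ x) {j j' : ℕ} (hjj' : j < j') (m m' : ℕ) :
    Disjoint (bigJumpEvent ξ c (x + 2 * c) j m) (bigJumpEvent ξ c (x + 2 * c) j' m') := by
  rw [Set.disjoint_left]
  rintro ω ⟨⟨hbefore, hjump⟩, -⟩ ⟨⟨hbefore', -⟩, -⟩
  have hj := abs_le.1 ((walkAbsMax_le_iff ξ ω).1 hbefore j le_rfl)
  have hj' := abs_le.1 ((walkAbsMax_le_iff ξ ω).1 hbefore' (j + 1) hjj')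
  rw [walk_succ] at hj'
  simp only [Set.mem_ofPred_eq] at hjump
  linarith [hj.1, hj'.2]

variable [MeasurableSpace Ω] {P : Measure Ω} [IsProbabilityMeasure P]
  (hmeas : ∀ i, Measurable (ξ i)) (hindep : iIndepFun ξ P)
  (hident : ∀ i, IdentDistrib (ξ i) (ξ 0) P P)
include hmeas

lemma measurableSet_bigJumpEvent (c b : ℝ) (j m : ℕ) :
    MeasurableSet (bigJumpEvent ξ c b j m) :=
  ((measurableSet_le (measurable_walkAbsMax fun _ _ => hmeas _) measurable_const).inter
    (measurableSet_lt measurable_const (hmeas j))).inter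
    (measurableSet_le (measurable_walkAbsMax fun _ _ => hmeas _) measurable_const)

include hindep hident

lemma measure_bigJumpEvent (c b : ℝ) (j m : ℕ) :
    P (bigJumpEvent ξ c b j m) =
      P {ω | walkAbsMax ξ j ω ≤ c} * P {ω | b < ξ 0 ω} *
        P {ω | walkAbsMax ξ m ω ≤ c} := by
  have hbefore : MeasurableSet[⨆ i ∈ Set.Iio j, MeasurableSpace.comap (ξ i) inferInstance]
      {ω | walkAbsMax ξ j ω ≤ c} :=
    measurableSet_le (measurable_walkAbsMax fun i hi => measurable_iSup_comap hi)
      measurable_const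
  have hjump (S : Set ℕ) (hj : j ∈ S) :
      MeasurableSet[⨆ i ∈ S, MeasurableSpace.comap (ξ i) inferInstance] {ω | b < ξ j ω} :=
    measurableSet_lt measurable_const (measurable_iSup_comap hj)
  have hafter : MeasurableSet[⨆ i ∈ Set.Ioi j, MeasurableSpace.comap (ξ i) inferInstance]
      {ω | walkAbsMax (fun i => ξ (j + 1 + i)) m ω ≤ c} :=
    measurableSet_le
      (measurable_walkAbsMax fun _ _ => measurable_iSup_comap (by simp; omega))
      measurable_const
  have hbefore_le : ⨆ i ∈ Set.Iio j, MeasurableSpace.comap (ξ i) inferInstance ≤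
      ⨆ i ∈ Set.Iic j, MeasurableSpace.comap (ξ i) inferInstance :=
    biSup_mono fun _ hi => Set.mem_Iic.2 (le_of_lt hi)
  have hshift : P {ω | walkAbsMax (fun i => ξ (j + 1 + i)) m ω ≤ c} =
      P {ω | walkAbsMax ξ m ω ≤ c} :=
    ((hindep.identDistrib_shift hmeas hident (j + 1)).comp
      (measurable_walkAbsMax (ξ := fun i (s : ℕ → ℝ) => s i)
        fun i _ => measurable_pi_apply i)).measure_mem_eq measurableSet_Iic
  rw [bigJumpEvent,
    hindep.measure_inter_eq_mul_of_disjoint hmeas (Set.Iic_disjoint_Ioi le_rfl)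
      ((hbefore_le _ hbefore).inter (hjump _ Set.self_mem_Iic)) hafter,
    hindep.measure_inter_eq_mul_of_disjoint hmeas (S := Set.Iio j)
      (Set.disjoint_singleton_right.2 (lt_irrefl j)) hbefore (hjump _ rfl),
    hshift]
  congr 2
  exact (hident j).measure_mem_eq measurableSet_Ioi

end BigJump

lemma card_mul_le_measure_of_pairwiseDisjoint {Ω ι : Type*} [MeasurableSpace Ω]
    {μ : Measure Ω} {I : Finset ι} {E : ι → Set Ω} {s : Set Ω} {a : ENNReal}
    (hE : ∀ i ∈ I, MeasurableSet (E i)) (hdisj : (I : Set ι).PairwiseDisjoint E)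
    (hsub : ∀ i ∈ I, E i ⊆ s) (ha : ∀ i ∈ I, a ≤ μ (E i)) :
    I.card * a ≤ μ s :=
  calc (I.card : ENNReal) * a = ∑ _ ∈ I, a := by simp
    _ ≤ ∑ i ∈ I, μ (E i) := Finset.sum_le_sum ha
    _ = μ (⋃ i ∈ I, E i) := (measure_biUnion_finset hdisj hE).symm
    _ ≤ μ s := measure_mono (Set.iUnion₂_subset hsub)

theorem walk_tail_lower_bound_general
    {Ω : Type*} [MeasurableSpace Ω] (P : Measure Ω) [IsProbabilityMeasure P]
    (ξ : ℕ → Ω → ℝ) (hmeas : ∀ i, Measurable (ξ i))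
    (hindep : iIndepFun ξ P)
    (hident : ∀ i, IdentDistrib (ξ i) (ξ 0) P P)
    (ε x : ℝ) (hx : 0 < x) (n : ℕ) :
    (n : ℝ) * (P {ω | walkAbsMax ξ n ω ≤ ε * x}).toReal ^ 2
        * (P {ω | (1 + 2 * ε) * x < ξ 0 ω}).toReal
      ≤ (P {ω | x < walk ξ n ω}).toReal := by
  set c := ε * x
  set p := P {ω | walkAbsMax ξ n ω ≤ c}
  set q := P {ω | (1 + 2 * ε) * x < ξ 0 ω}
  have hb : (1 + 2 * ε) * x = x + 2 * c := by ring
  have hp (k : ℕ) (hk : k ≤ n) : p ≤ P {ω | walkAbsMax ξ k ω ≤ c} :=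
    measure_mono fun ω hω => (walkAbsMax_mono ξ ω hk).trans hω
  let E j := bigJumpEvent ξ c (x + 2 * c) j (n - j - 1)
  have key : (n : ENNReal) * (p * q * p) ≤ P {ω | x < walk ξ n ω} := by
    simpa using card_mul_le_measure_of_pairwiseDisjoint (I := Finset.range n) (E := E)
      (fun j _ => measurableSet_bigJumpEvent ξ hmeas _ _ _ _)
      (fun j _ j' _ hne => hne.lt_or_gt.elim (bigJumpEvent_disjoint ξ hx.le · _ _)
        fun h => (bigJumpEvent_disjoint ξ hx.le h _ _).symm)
      (fun j hj => by
        convert bigJumpEvent_subset ξ j (n - j - 1) using 5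
        have := Finset.mem_range.1 hj
        omega)
      (fun j hj => by
        have := Finset.mem_range.1 hj
        rw [measure_bigJumpEvent ξ hmeas hindep hident, ← hb]
        gcongr <;> apply hp <;> omega)
  calc (n : ℝ) * p.toReal ^ 2 * q.toReal = ((n : ENNReal) * (p * q * p)).toReal := by
        simp only [ENNReal.toReal_mul, ENNReal.toReal_natCast]; ring
    _ ≤ (P {ω | x < walk ξ n ω}).toReal := ENNReal.toReal_mono (measure_ne_top P _) key

/-- For every `ε > 0`, `x > 0` and `n ≥ 1`:
`P(S_n > x) ≥ n ⬝ P(max_{0≤k≤n} |S_k| ≤ ε x)² ⬝ P(ξ₁ > (1+2ε) x)`. -/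
theorem walk_tail_lower_bound
    {Ω : Type*} [MeasurableSpace Ω] (P : Measure Ω) [IsProbabilityMeasure P]
    (ξ : ℕ → Ω → ℝ) (hmeas : ∀ i, Measurable (ξ i))
    (hindep : iIndepFun ξ P)
    (hident : ∀ i, IdentDistrib (ξ i) (ξ 0) P P)
    (ε x : ℝ) (hε : 0 < ε) (hx : 0 < x) (n : ℕ) (hn : 1 ≤ n) :
    (n : ℝ) * (P {ω | walkAbsMax ξ n ω ≤ ε * x}).toReal ^ 2
        * (P {ω | (1 + 2 * ε) * x < ξ 0 ω}).toReal
      ≤ (P {ω | x < walk ξ n ω}).toReal :=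
  walk_tail_lower_bound_general P ξ hmeas hindep hident ε x hx n
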